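/- arXiv:2009.08222 — 3 statements merged into one kernel-verified Lean document; each statement's English description precedes it below -/
import Mathlib

section
/- (Robbins's recursion) Let H ≥ 2 be an integer with Zeckendorf expansion H = F_{m_0} + F_{m_1} + ... + F_{m_k} and suppose k ≥ 1. Then R(H) = t_1·R(x_1) − ε_1·R(x_2). -/
open scoped BigOperators
open Filter Topology

/-- A natural number is a Fibonacci number, i.e. equals `F m` for some `m ≥ 1`
(with `F 1 = F 2 = 1`). -/
def IsFibNum (x : ℕ) : Prop := ∃ m : ℕ, 0 < m ∧ Nat.fib m = x

/-- `R n` counts the partitions of `n` into distinct Fibonacci numbers: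
the number of finite sets of Fibonacci numbers with sum `n` (so `R 0 = 1`). -/
noncomputable def R (n : ℕ) : ℕ :=
  Nat.card {S : Finset ℕ // (∀ x ∈ S, IsFibNum x) ∧ (∑ x ∈ S, x) = n}

/-- The summatory function `A H = ∑_{n=0}^{H} R n`. -/
noncomputable def A (H : ℕ) : ℕ := ∑ n ∈ Finset.range (H + 1), R n

/-!
Write `c_M(n)` for the number of sets `S ⊆ {2, …, M}` with `∑_{i ∈ S} F_i = n`. Then
`R(n) = c_M(n)` as soon as `n < F_{M+1}`, and splitting on whether `M + 1 ∈ S` gives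
`c_{M+1}(n + F_{M+1}) = c_M(n + F_{M+1}) + c_M(n)`. For `y = x_1` the numbers
`T_j = c_j(y + F_j)` therefore satisfy `T_{j+2} = T_j + R(y)`, and `R(H) = T_{m_0}`.
Descending from `m_0` in steps of two ends either at `T_{m_1} = R(y) - R(x_2)` (this is
where the Zeckendorf condition enters, through `x_2 < F_{m_1 - 1}`) or at
`T_{m_1+1} = R(y)`, according to the parity of `m_0 - m_1`; these are the cases `ε_1 = 1`
and `ε_1 = 0`, and the number of steps is `t_1 - 1`.
-/

open Finset Nat

/-- Fibonacci indices start at `2`, where `fib` is injective (`fib 1 = fib 2`). -/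
def fibRepCount (M n : ℕ) : ℕ :=
  #{S ∈ (Icc 2 M).powerset | ∑ i ∈ S, fib i = n}

lemma sum_fib_Icc_two_add_two {M : ℕ} (hM : 1 ≤ M) :
    ∑ i ∈ Icc 2 M, fib i + 2 = fib (M + 2) := by
  rw [fib_succ_eq_succ_sum, range_eq_Ico,
    ← sum_Ico_consecutive _ (show 0 ≤ 2 by omega) (show 2 ≤ M + 1 by omega),
    Ico_add_one_right_eq_Icc]
  simp [sum_range_succ]
  omega

lemma fibRepCount_eq_zero {M n : ℕ} (hM : 1 ≤ M) (hn : fib (M + 2) ≤ n + 1) :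
    fibRepCount M n = 0 := by
  rw [fibRepCount, Finset.card_eq_zero, filter_eq_empty_iff]
  intro S hS
  have := sum_le_sum_of_subset (f := fib) (mem_powerset.mp hS)
  have := sum_fib_Icc_two_add_two hM
  omega

lemma fibRepCount_succ_add {M : ℕ} (hM : 1 ≤ M) (n : ℕ) :
    fibRepCount (M + 1) (n + fib (M + 1)) =
      fibRepCount M (n + fib (M + 1)) + fibRepCount M n := by
  have hnotin : M + 1 ∉ Icc 2 M := by simp
  simp only [fibRepCount, card_filter]
  rw [← insert_Icc_right_eq_Icc_add_one (by omega), sum_powerset_insert hnotin]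
  congr 1
  refine sum_congr rfl fun S hS => ?_
  rw [sum_insert (notMem_of_mem_powerset_of_notMem hS hnotin)]
  simp only [add_comm (fib (M + 1)), Nat.add_right_cancel_iff]

lemma IsFibNum.mem_image_fib_Icc {M x : ℕ} (hx : IsFibNum x) (hlt : x < fib (M + 1)) :
    x ∈ (Icc 2 M).image fib := by
  obtain ⟨i, hi, rfl⟩ := hx
  obtain ⟨j, hj, hji⟩ : ∃ j, 2 ≤ j ∧ fib j = fib i := by
    rcases Nat.lt_or_ge i 2 with h | h
    · exact ⟨2, le_rfl, by interval_cases i; rfl⟩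
    · exact ⟨i, h, rfl⟩
  rw [← hji, fib_lt_fib hj] at hlt
  exact mem_image.mpr ⟨j, mem_Icc.mpr ⟨hj, Nat.lt_succ_iff.mp hlt⟩, hji⟩

lemma R_eq_fibRepCount {M n : ℕ} (hn : n < fib (M + 1)) : R n = fibRepCount M n := by
  have hinj : Set.InjOn fib (Icc 2 M : Set ℕ) :=
    fib_strictMonoOn.injOn.mono fun i hi => (mem_Icc.mp hi).1
  have hmem : ∀ S : Finset ℕ, ((∀ x ∈ S, IsFibNum x) ∧ ∑ x ∈ S, x = n) ↔
      S ∈ {S ∈ ((Icc 2 M).image fib).powerset | ∑ x ∈ S, x = n} := by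
    intro S
    simp only [mem_filter, mem_powerset, and_congr_left_iff]
    intro hsum
    refine ⟨fun hS x hx => (hS x hx).mem_image_fib_Icc ?_, fun hS x hx => ?_⟩
    · exact (hsum ▸ single_le_sum (f := fun x => x) (fun _ _ => Nat.zero_le _) hx).trans_lt hn
    · obtain ⟨i, hi, rfl⟩ := mem_image.mp (hS hx)
      exact ⟨i, by simp at hi; omega, rfl⟩
  rw [R, Nat.card_congr (Equiv.subtypeEquivRight hmem), Nat.card_eq_finsetCard, powerset_image,
    filter_image,
    Finset.card_image_of_injOn ((image_injOn_powerset_of_injOn hinj).mono (filter_subset _ _)),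
    fibRepCount]
  refine congrArg card (filter_congr fun S hS => ?_)
  rw [sum_image (hinj.mono (mem_powerset.mp hS))]

lemma add_fib_lt_fib_add_two {a y : ℕ} (hy : y < fib a) : y + fib (a + 1) < fib (a + 2) := by
  rw [fib_add_two]; omega

lemma fibRepCount_add_two_add_fib {j n : ℕ} (hj : 1 ≤ j) (hn : n < fib (j + 2)) :
    fibRepCount (j + 2) (n + fib (j + 2)) = fibRepCount j (n + fib j) + R n := by
  have hfib : n + fib (j + 2) = n + fib j + fib (j + 1) := by rw [fib_add_two]; ring
  have hzero : fibRepCount j (n + fib (j + 2)) = 0 := fibRepCount_eq_zero hj (by omega)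
  rw [fibRepCount_succ_add (by omega), ← R_eq_fibRepCount hn, hfib,
    fibRepCount_succ_add hj, ← hfib, hzero, zero_add]

lemma fibRepCount_add_two_mul_add_fib {j n : ℕ} (hj : 1 ≤ j) (hn : n < fib (j + 2)) (s : ℕ) :
    fibRepCount (j + 2 * s) (n + fib (j + 2 * s)) = fibRepCount j (n + fib j) + s * R n := by
  induction s with
  | zero => simp
  | succ s ih =>
    rw [show j + 2 * (s + 1) = j + 2 * s + 2 by ring,
      fibRepCount_add_two_add_fib (by omega) (hn.trans_le (fib_mono (by omega))), ih]
    ring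

lemma fibRepCount_add_fib_add_R {j z : ℕ} (hj : 1 ≤ j) (hz : z < fib j) :
    fibRepCount (j + 1) (z + fib (j + 1) + fib (j + 1)) + R z = R (z + fib (j + 1)) := by
  have hzero : fibRepCount j (z + fib (j + 1) + fib (j + 1)) = 0 :=
    fibRepCount_eq_zero hj (by have := fib_le_fib_succ (n := j); rw [fib_add_two]; omega)
  rw [fibRepCount_succ_add hj, hzero, zero_add, R_eq_fibRepCount (hz.trans_le fib_le_fib_succ),
    R_eq_fibRepCount (add_fib_lt_fib_add_two hz), fibRepCount_succ_add hj]

lemma fibRepCount_add_fib_eq_R {j y : ℕ} (hy₁ : fib (j + 1) ≤ y) (hy₂ : y < fib (j + 2)) :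
    fibRepCount (j + 2) (y + fib (j + 2)) = R y := by
  have hzero : fibRepCount (j + 1) (y + fib (j + 2)) = 0 :=
    fibRepCount_eq_zero (by omega) (by rw [fib_add_two, show j + 1 + 1 = j + 2 from rfl]; omega)
  rw [fibRepCount_succ_add (by omega), hzero, zero_add, R_eq_fibRepCount hy₂]

lemma R_add_fib_of_even {j z : ℕ} (hj : 1 ≤ j) (hz : z < fib j) (s : ℕ) :
    R (z + fib (j + 1) + fib (j + 1 + 2 * (s + 1))) + R z = (s + 2) * R (z + fib (j + 1)) := by
  have hy : z + fib (j + 1) < fib (j + 2) := add_fib_lt_fib_add_two hz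
  have ha : j + 1 + 2 * (s + 1) = j + 2 * s + 2 + 1 := by ring
  have hlt : z + fib (j + 1) < fib (j + 2 * s + 2) := hy.trans_le (fib_mono (by omega))
  rw [ha, R_eq_fibRepCount (add_fib_lt_fib_add_two hlt), ← ha,
    fibRepCount_add_two_mul_add_fib (by omega) (hy.trans_le (fib_mono (by omega))),
    add_right_comm, fibRepCount_add_fib_add_R hj hz]
  ring

lemma R_add_fib_of_odd {j z : ℕ} (hz : z < fib j) (s : ℕ) :
    R (z + fib (j + 1) + fib (j + 2 + 2 * (s + 1))) = (s + 2) * R (z + fib (j + 1)) := by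
  have hy : z + fib (j + 1) < fib (j + 2) := add_fib_lt_fib_add_two hz
  have ha : j + 2 + 2 * (s + 1) = j + 2 * s + 3 + 1 := by ring
  have hlt : z + fib (j + 1) < fib (j + 2 * s + 3) := hy.trans_le (fib_mono (by omega))
  rw [ha, R_eq_fibRepCount (add_fib_lt_fib_add_two hlt), ← ha,
    fibRepCount_add_two_mul_add_fib (by omega) (hy.trans_le (fib_mono (by omega))),
    fibRepCount_add_fib_eq_R (by omega) hy]
  ring

lemma R_add_fib_add_fib {a b z : ℕ} (hab : b + 2 ≤ a) (hz : z < fib (b - 1)) :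
    (R (z + fib b + fib a) : ℤ) = ((a - b + 2) / 2 : ℕ) * (R (z + fib b) : ℤ)
      - (2 * ((a - b + 2) / 2 : ℕ) - 1 - a + b : ℤ) * R z := by
  have hj : 1 ≤ b - 1 := fib_pos.mp ((Nat.zero_le z).trans_lt hz)
  obtain ⟨j, rfl⟩ : ∃ j, b = j + 1 := ⟨b - 1, by omega⟩
  rw [Nat.add_sub_cancel] at hz hj
  obtain ⟨s, hs | hs⟩ := Nat.even_or_odd' (a - (j + 1) - 2)
  · have hR := R_add_fib_of_even hj hz s
    rw [show a = j + 1 + 2 * (s + 1) by omega,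
      show (j + 1 + 2 * (s + 1) - (j + 1) + 2) / 2 = s + 2 by omega]
    push_cast
    linarith [congrArg (Nat.cast : ℕ → ℤ) hR]
  · rw [show a = j + 2 + 2 * (s + 1) by omega,
      show (j + 2 + 2 * (s + 1) - (j + 1) + 2) / 2 = s + 2 by omega, R_add_fib_of_odd hz s]
    push_cast
    ring

lemma sum_Icc_succ_fib_lt_fib_sub_one {m : ℕ → ℕ} {l k : ℕ} (hlk : l ≤ k)
    (hgap : ∀ i, l < i → i ≤ k → m i + 2 ≤ m (i - 1)) (hmk : 2 ≤ m k) :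
    ∑ i ∈ Icc (l + 1) k, fib (m i) < fib (m l - 1) := by
  obtain ⟨d, rfl⟩ := Nat.exists_eq_add_of_le hlk
  induction d generalizing l with
  | zero => simp only [Nat.add_zero] at hmk ⊢; simp [fib_pos]; omega
  | succ d ih =>
    have htail := ih (l := l + 1) (by omega) (fun i hi hik => hgap i (by omega) (by omega))
      (by rwa [add_right_comm])
    have hl := hgap (l + 1) (by omega) (by omega)
    rw [Nat.add_sub_cancel] at hl
    have hpos : 1 ≤ m (l + 1) - 1 := fib_pos.mp ((Nat.zero_le _).trans_lt htail)
    obtain ⟨c, hc⟩ : ∃ c, m (l + 1) = c + 1 := ⟨m (l + 1) - 1, by omega⟩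
    rw [← insert_Icc_add_one_left_eq_Icc (by omega), sum_insert (by simp), add_comm,
      show l + (d + 1) = l + 1 + d by ring]
    rw [hc, Nat.add_sub_cancel] at htail
    rw [hc] at hl ⊢
    exact (add_fib_lt_fib_add_two htail).trans_le (fib_mono (by omega))

theorem robbins_recursion_general
    (H k : ℕ) (m x t : ℕ → ℕ) (ε : ℕ → ℤ)
    (hk : 1 ≤ k)
    (hexp : H = ∑ i ∈ Finset.range (k + 1), Nat.fib (m i))
    (hgap : ∀ i : ℕ, 1 ≤ i → i ≤ k → m i + 2 ≤ m (i - 1))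
    (hmk : 2 ≤ m k)
    (hx : ∀ l : ℕ, l ≤ k + 1 → x l = ∑ i ∈ Finset.Icc l k, Nat.fib (m i))
    (ht : ∀ i : ℕ, 1 ≤ i → i ≤ k → t i = (m (i - 1) - m i + 2) / 2)
    (hε : ∀ i : ℕ, 1 ≤ i → i ≤ k →
      ε i = 2 * (t i : ℤ) - 1 - (m (i - 1) : ℤ) + (m i : ℤ)) :
    (R H : ℤ) = (t 1 : ℤ) * (R (x 1) : ℤ) - ε 1 * (R (x 2) : ℤ) := by
  have hx_succ : ∀ l ≤ k, x l = x (l + 1) + fib (m l) := fun l hl => by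
    rw [hx l (by omega), hx (l + 1) (by omega), ← insert_Icc_add_one_left_eq_Icc hl,
      sum_insert (by simp), add_comm]
  have hH : H = x 2 + fib (m 1) + fib (m 0) := by
    rw [hexp, range_succ_eq_Icc_zero, ← hx 0 (by omega), hx_succ 0 (by omega), hx_succ 1 hk]
  have hz : x 2 < fib (m 1 - 1) := by
    rw [hx 2 (by omega)]
    exact sum_Icc_succ_fib_lt_fib_sub_one hk (fun i hi => hgap i (by omega)) hmk
  rw [hε 1 le_rfl hk, ht 1 le_rfl hk, hH, hx_succ 1 hk]
  exact R_add_fib_add_fib (hgap 1 le_rfl hk) hz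

/-- Robbins's recursion. -/
theorem robbins_recursion
    (H k : ℕ) (m x t : ℕ → ℕ) (ε : ℕ → ℤ)
    (hH : 2 ≤ H) (hk : 1 ≤ k)
    (hexp : H = ∑ i ∈ Finset.range (k + 1), Nat.fib (m i))
    (hgap : ∀ i : ℕ, 1 ≤ i → i ≤ k → m i + 2 ≤ m (i - 1))
    (hmk : 2 ≤ m k)
    (hx : ∀ l : ℕ, l ≤ k + 1 → x l = ∑ i ∈ Finset.Icc l k, Nat.fib (m i))
    (ht : ∀ i : ℕ, 1 ≤ i → i ≤ k → t i = (m (i - 1) - m i + 2) / 2)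
    (hε : ∀ i : ℕ, 1 ≤ i → i ≤ k →
      ε i = 2 * (t i : ℤ) - 1 - (m (i - 1) : ℤ) + (m i : ℤ)) :
    (R H : ℤ) = (t 1 : ℤ) * (R (x 1) : ℤ) - ε 1 * (R (x 2) : ℤ) :=
  robbins_recursion_general H k m x t ε hk hexp hgap hmk hx ht hε
end

section
/- A(F_m) is asymptotic to 2^m/6 as m → ∞; that is, lim_{m→∞} A(F_m)/2^m = 1/6. -/
open scoped BigOperators
open Filter Topology

/-!
`A H` counts the sets of Fibonacci numbers with sum at most `H`, and for `H = F_{k+2}` only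
`F_2, …, F_{k+2}` can occur. A set using `F_{k+2}` is `{F_{k+2}}` itself; a set using `F_{k+1}`
but not `F_{k+2}` leaves the budget `F_k` for the rest; and every subset of `F_2, …, F_k` fits,
since `F_2 + ⋯ + F_k = F_{k+2} - 2`. Hence `A(F_{k+2}) = A(F_k) + 2^{k-1} + 1`, which solves to
`6 A(F_m) = 2^m + 3m + (1 or 2)`.
-/

open Finset Nat

def subsetSumCount (s : Finset ℕ) (t : ℕ) : ℕ := #{S ∈ s.powerset | ∑ x ∈ S, x ≤ t}

section SubsetSumCount

variable {s : Finset ℕ} {t : ℕ}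

theorem subsetSumCount_insert {a : ℕ} (ha : a ∉ s) :
    subsetSumCount (insert a s) (t + a) = subsetSumCount s (t + a) + subsetSumCount s t := by
  simp only [subsetSumCount, card_filter, sum_powerset_insert ha]
  congr 1
  refine sum_congr rfl fun S hS => ?_
  simp only [sum_insert fun h => ha (mem_powerset.1 hS h), add_comm a, Nat.add_le_add_iff_right]

theorem subsetSumCount_of_sum_le (h : ∑ x ∈ s, x ≤ t) : subsetSumCount s t = 2 ^ #s := by
  rw [subsetSumCount, filter_true_of_mem, card_powerset]
  exact fun S hS => (sum_le_sum_of_subset (mem_powerset.1 hS)).trans h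

theorem subsetSumCount_zero (hs : 0 ∉ s) : subsetSumCount s 0 = 1 := by
  rw [subsetSumCount, card_eq_one]
  refine ⟨∅, eq_singleton_iff_unique_mem.2 ⟨by simp, fun S hS => ?_⟩⟩
  simp only [mem_filter, mem_powerset, Nat.le_zero, sum_eq_zero_iff] at hS
  exact eq_empty_of_forall_notMem fun x hx => hs (hS.2 x hx ▸ hS.1 hx)

end SubsetSumCount

/-- `{F_2, …, F_{N+1}}` -/
def fibs (N : ℕ) : Finset ℕ :=
  (range N).map ⟨fun i => fib (i + 2), fib_add_two_strictMono.injective⟩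

theorem fibs_add_one (N : ℕ) : fibs (N + 1) = insert (fib (N + 2)) (fibs N) := by
  rw [fibs, range_add_one, map_insert]
  rfl

theorem fib_notMem_fibs (N : ℕ) : fib (N + 2) ∉ fibs N := by
  simp [fibs]

theorem zero_notMem_fibs (N : ℕ) : 0 ∉ fibs N := by
  simp [fibs]

theorem card_fibs (N : ℕ) : #(fibs N) = N := by
  simp [fibs]

theorem sum_fibs_add_two (N : ℕ) : ∑ x ∈ fibs N, x + 2 = fib (N + 3) := by
  rw [fibs, sum_map, fib_succ_eq_succ_sum, sum_range_succ', sum_range_succ']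
  simp

theorem isFibNum_iff_mem_fibs {x N : ℕ} (hx : x < fib (N + 2)) : IsFibNum x ↔ x ∈ fibs N := by
  simp only [fibs, Finset.mem_map, mem_range, Function.Embedding.coeFn_mk]
  constructor
  · rintro ⟨m, hm, rfl⟩
    -- `F_1 = F_2`, so the truncated `m - 2` is the right index also for `m = 1`
    have hm2 : fib (m - 2 + 2) = fib m := by
      rcases (show m = 1 ∨ 2 ≤ m by omega) with rfl | h
      · rfl
      · rw [Nat.sub_add_cancel h]
    exact ⟨m - 2, fib_add_two_strictMono.lt_iff_lt.1 (hm2 ▸ hx), hm2⟩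
  · rintro ⟨i, -, rfl⟩
    exact ⟨i + 2, by omega, rfl⟩

theorem R_eq_card {n N : ℕ} (hn : n < fib (N + 2)) :
    R n = #{S ∈ (fibs N).powerset | ∑ x ∈ S, x = n} := by
  rw [R, ← Nat.card_eq_finsetCard]
  refine Nat.card_congr (Equiv.subtypeEquivRight fun S => ?_)
  rw [mem_filter, mem_powerset, subset_iff]
  refine and_congr_left fun hsum => forall₂_congr fun x hx => isFibNum_iff_mem_fibs ?_
  exact (single_le_sum (fun _ _ => Nat.zero_le _) hx).trans_lt (hsum ▸ hn)

theorem A_eq_subsetSumCount {H N : ℕ} (hH : H < fib (N + 2)) :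
    A H = subsetSumCount (fibs N) H := by
  rw [A, subsetSumCount,
    card_eq_sum_card_fiberwise (f := fun S => ∑ x ∈ S, x) (t := range (H + 1))]
  · refine sum_congr rfl fun n hn => ?_
    have hnH : n ≤ H := Nat.lt_succ_iff.1 (mem_range.1 hn)
    rw [R_eq_card (hnH.trans_lt hH), filter_filter]
    congr 1
    exact filter_congr fun S _ => ⟨fun h => ⟨by omega, h⟩, And.right⟩
  · intro S hS
    exact mem_range.2 (Nat.lt_succ_of_le (mem_filter.1 hS).2)

theorem A_fib_add_four (n : ℕ) : A (fib (n + 4)) = A (fib (n + 2)) + 2 ^ (n + 1) + 1 := by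
  have hF : fib (n + 4) = fib (n + 2) + fib (n + 3) := fib_add_two
  have hall : subsetSumCount (fibs (n + 1)) (fib (n + 4)) = 2 ^ (n + 1) := by
    rw [subsetSumCount_of_sum_le, card_fibs]
    have : ∑ x ∈ fibs (n + 1), x + 2 = fib (n + 4) := sum_fibs_add_two (n + 1)
    omega
  calc A (fib (n + 4)) = subsetSumCount (fibs (n + 3)) (0 + fib (n + 4)) := by
        rw [zero_add]
        exact A_eq_subsetSumCount (fib_add_two_strictMono (lt_add_one _))
    _ = subsetSumCount (fibs (n + 2)) (fib (n + 2) + fib (n + 3)) + 1 := by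
        rw [fibs_add_one, subsetSumCount_insert (fib_notMem_fibs _),
          subsetSumCount_zero (zero_notMem_fibs _), zero_add, hF]
    _ = A (fib (n + 2)) + 2 ^ (n + 1) + 1 := by
        rw [fibs_add_one, subsetSumCount_insert (fib_notMem_fibs _), ← hF, hall,
          ← A_eq_subsetSumCount (fib_add_two_strictMono (lt_add_one _)), add_comm (2 ^ _)]

theorem six_mul_A_fib (n : ℕ) :
    6 * A (fib (n + 2)) = 2 ^ (n + 2) + 3 * (n + 2) + if Even n then 2 else 1 := by
  induction n using Nat.twoStepInduction with
  | zero => rw [A_eq_subsetSumCount (N := 1) (by decide)]; decide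
  | one => rw [A_eq_subsetSumCount (N := 2) (by decide)]; decide
  | more n ih _ =>
    have h4 : 2 ^ (n + 2 + 2) = 4 * 2 ^ (n + 2) := by ring
    have h2 : 2 ^ (n + 2) = 2 * 2 ^ (n + 1) := by ring
    simp only [A_fib_add_four, Nat.even_add, even_two, iff_true] at ih ⊢
    omega

theorem A_fib_bounds {m : ℕ} (hm : 2 ≤ m) :
    (2 : ℝ) ^ m ≤ 6 * A (fib m) ∧ 6 * (A (fib m) : ℝ) ≤ 2 ^ m + 3 * m + 2 := by
  obtain ⟨n, rfl⟩ := Nat.exists_eq_add_of_le' hm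
  have h := six_mul_A_fib n
  constructor <;> exact_mod_cast (by split_ifs at h <;> omega)

/-- `A(F_m) ~ 2^m / 6` as `m → ∞`. -/
theorem summatory_at_fib_asymptotic :
    Tendsto (fun m : ℕ => (A (Nat.fib m) : ℝ) / 2 ^ m) atTop (𝓝 (1 / 6)) := by
  have herr : Tendsto (fun m : ℕ => (3 * (m : ℝ) + 2) / 2 ^ m / 6) atTop (𝓝 0) := by
    have h1 := tendsto_pow_const_div_const_pow_of_one_lt 1 one_lt_two
    have h0 := tendsto_pow_const_div_const_pow_of_one_lt 0 one_lt_two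
    convert ((h1.const_mul 3).add (h0.const_mul 2)).div_const 6 using 2 <;> ring
  have hupper :
      Tendsto (fun m : ℕ => 1 / 6 + (3 * (m : ℝ) + 2) / 2 ^ m / 6) atTop (𝓝 (1 / 6)) := by
    simpa using tendsto_const_nhds.add herr
  refine tendsto_of_tendsto_of_tendsto_of_le_of_le' tendsto_const_nhds hupper ?_ ?_
    <;> filter_upwards [eventually_ge_atTop 2] with m hm
  · rw [le_div_iff₀ (by positivity)]
    linarith [(A_fib_bounds hm).1]
  · calc (A (fib m) : ℝ) / 2 ^ m ≤ (2 ^ m + 3 * m + 2) / 6 / 2 ^ m := by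
          gcongr
          linarith [(A_fib_bounds hm).2]
      _ = 1 / 6 + (3 * m + 2) / 2 ^ m / 6 := by
          field_simp
          ring
end

section
/- Let H be a positive integer with Zeckendorf expansion H = F_{m_0} + F_{m_1} + ... + F_{m_k} and suppose k ≥ 1. Then for every ℓ with 1 ≤ ℓ ≤ k, A(H) = a_ℓ·A(x_ℓ) − ε_ℓ·a_{ℓ−1}·A(x_{ℓ+1}) + Σ_{i=1}^{ℓ} a_{i−1}·f(t_i)·2^{m_{i−1} − 2t_i}. -/
open scoped BigOperators
open Filter Topology

/-- `f t = 1 + 2(4^{t-1} - 1)/3` (an integer for `t ≥ 1`). -/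
def fInt (t : ℕ) : ℤ := 1 + 2 * (4 ^ (t - 1) - 1) / 3

/-!
Index `i` stands for the Fibonacci number `F (i + 2)`. For `B < F (n + 2)` the sets counted by
`A B` use only indices below `n`, so `A B = N n B`, the number of subsets of `{0, …, n - 1}` of
weight at most `B`. Splitting on the index `n` gives
`N (n + 1) (F (n + 2) + B) = N n (F (n + 2) + B) + N n B`, and `N n B = 2 ^ n` as soon as `B` is
at least the total weight `F (n + 3) - 2`. Applying the split twice yields
`A (F (M + g) + y) = A (F (M + g - 2) + y) + A y + 2 ^ (M + g - 3)` for a Zeckendorf tail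
`y = F M + x'`, which resolves into the one-step recursion
`A (x (i - 1)) = t i * A (x i) - ε i * A (x (i + 1)) + f (t i) * 2 ^ (m (i - 1) - 2 t i)`.
Unrolling this three-term recursion produces the continuants `a l`.
-/

open Finset
open Nat (fib)

lemma isFibNum_iff_exists_fib_add_two {x : ℕ} : IsFibNum x ↔ ∃ i, fib (i + 2) = x := by
  constructor
  · rintro ⟨m, hm, rfl⟩
    rcases Nat.lt_or_ge m 2 with hm2 | hm2
    · obtain rfl : m = 1 := by omega
      exact ⟨0, rfl⟩
    · exact ⟨m - 2, by rw [Nat.sub_add_cancel hm2]⟩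
  · rintro ⟨i, rfl⟩
    exact ⟨i + 2, by omega, rfl⟩

lemma subset_range_of_sum_fib_lt {T : Finset ℕ} {N : ℕ}
    (h : ∑ i ∈ T, fib (i + 2) < fib (N + 2)) : T ⊆ range N := fun _ hi =>
  mem_range.2 <| Nat.fib_add_two_strictMono.lt_iff_lt.1 <|
    (single_le_sum (fun j _ => Nat.zero_le (fib (j + 2))) hi).trans_lt h

lemma R_eq_card_filter_powerset {n N : ℕ} (hn : n < fib (N + 2)) :
    R n = #{T ∈ (range N).powerset | ∑ i ∈ T, fib (i + 2) = n} := by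
  have hinj : Function.Injective fun i => fib (i + 2) := Nat.fib_add_two_strictMono.injective
  let toFibSet (T : {T // T ∈ {T ∈ (range N).powerset | ∑ i ∈ T, fib (i + 2) = n}}) :
      {S : Finset ℕ // (∀ x ∈ S, IsFibNum x) ∧ (∑ x ∈ S, x) = n} :=
    ⟨T.1.image fun i => fib (i + 2), by
      refine ⟨fun x hx => ?_, ?_⟩
      · obtain ⟨i, -, rfl⟩ := mem_image.1 hx
        exact isFibNum_iff_exists_fib_add_two.2 ⟨i, rfl⟩
      · rw [sum_image hinj.injOn]
        exact (mem_filter.1 T.2).2⟩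
  have hbij : Function.Bijective toFibSet := by
    refine ⟨fun _ _ h => Subtype.ext (image_injective hinj (congrArg Subtype.val h)), ?_⟩
    rintro ⟨S, hfib, hsum⟩
    obtain ⟨T, -, rfl⟩ := subset_set_image_iff (f := fun i => fib (i + 2)).1 fun x hx =>
      ⟨_, Set.mem_univ _, (isFibNum_iff_exists_fib_add_two.1 (hfib x hx)).choose_spec⟩
    rw [sum_image hinj.injOn] at hsum
    have hT := mem_powerset.2 (subset_range_of_sum_fib_lt (hsum ▸ hn))
    exact ⟨⟨T, mem_filter.2 ⟨hT, hsum⟩⟩, rfl⟩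
  rw [R, ← Nat.card_eq_of_bijective toFibSet hbij, Nat.card_eq_finsetCard]

def fibSubsetCount (n B : ℕ) : ℕ := #{T ∈ (range n).powerset | ∑ i ∈ T, fib (i + 2) ≤ B}

lemma A_eq_fibSubsetCount {H n : ℕ} (hH : H < fib (n + 2)) : A H = fibSubsetCount n H := by
  rw [fibSubsetCount, card_eq_sum_card_fiberwise (t := range (H + 1))
    (f := fun T => ∑ i ∈ T, fib (i + 2))
    fun T hT => mem_range.2 (Nat.lt_succ_of_le (mem_filter.1 hT).2), A]
  refine sum_congr rfl fun b hb => ?_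
  have hb : b ≤ H := Nat.lt_succ_iff.1 (mem_range.1 hb)
  rw [R_eq_card_filter_powerset (N := n) (by omega), filter_filter]
  exact congrArg card (filter_congr fun T _ => by dsimp only; omega)

lemma fibSubsetCount_succ (n B : ℕ) :
    fibSubsetCount (n + 1) (fib (n + 2) + B) =
      fibSubsetCount n (fib (n + 2) + B) + fibSubsetCount n B := by
  simp only [fibSubsetCount, card_filter, range_add_one]
  rw [sum_powerset_insert notMem_range_self]
  congr 1
  refine sum_congr rfl fun T hT => ?_
  rw [sum_insert fun h => notMem_range_self (mem_powerset.1 hT h)]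
  congr 1
  exact propext (by omega)

lemma sum_range_fib_add_two (n : ℕ) : ∑ i ∈ range n, fib (i + 2) + 2 = fib (n + 3) := by
  induction n with
  | zero => rfl
  | succ n ih =>
    have h : fib (n + 1 + 3) = fib (n + 2) + fib (n + 3) := Nat.fib_add_two
    rw [sum_range_succ]
    omega

lemma fibSubsetCount_eq_two_pow {n B : ℕ} (hB : fib (n + 3) ≤ B + 2) :
    fibSubsetCount n B = 2 ^ n := by
  rw [fibSubsetCount, filter_true_of_mem, card_powerset, card_range]
  intro T hT
  have := sum_le_sum_of_subset (f := fun i => fib (i + 2)) (mem_powerset.1 hT)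
  have := sum_range_fib_add_two n
  omega

lemma fInt_succ_succ (s : ℕ) : fInt (s + 2) = fInt (s + 1) + 2 ^ (2 * s + 1) := by
  obtain ⟨d, hd⟩ : (3 : ℤ) ∣ 4 ^ s - 1 := by simpa using sub_one_dvd_pow_sub_one (4 : ℤ) s
  have h4 : (4 : ℤ) ^ (s + 1) - 1 = 3 * (4 * d + 1) := by rw [pow_succ]; linarith
  have h2 : (2 : ℤ) ^ (2 * s + 1) = 2 * (3 * d + 1) := by
    rw [pow_succ, pow_mul, show (2 : ℤ) ^ 2 = 4 by norm_num]; linarith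
  rw [fInt, fInt, Nat.add_sub_cancel, show s + 2 - 1 = s + 1 from rfl, h4, hd, h2]
  omega

section FibAddFibAdd

variable {p x' : ℕ} (hx' : x' < fib (p + 1))
include hx'

lemma fibSubsetCount_fib_add_fib_add_zero :
    fibSubsetCount (p + 1) (fib (p + 2) + (fib (p + 2) + x')) + A x' =
      2 ^ p + A (fib (p + 2) + x') := by
  have hfib : fib (p + 3) = fib (p + 1) + fib (p + 2) := Nat.fib_add_two
  have hmono : fib (p + 1) ≤ fib (p + 2) := Nat.fib_mono (by omega)
  have hA : A (fib (p + 2) + x') = fibSubsetCount p (fib (p + 2) + x') + A x' := by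
    rw [A_eq_fibSubsetCount (n := p + 1) (show _ < fib (p + 3) by omega), fibSubsetCount_succ,
      A_eq_fibSubsetCount (n := p) (H := x') (by omega)]
  rw [fibSubsetCount_succ, fibSubsetCount_eq_two_pow (show fib (p + 3) ≤ _ by omega), hA]
  omega

lemma fibSubsetCount_fib_add_fib_add_one :
    fibSubsetCount (p + 2) (fib (p + 3) + (fib (p + 2) + x')) =
      2 ^ (p + 1) + A (fib (p + 2) + x') := by
  have hfib : fib (p + 3) = fib (p + 1) + fib (p + 2) := Nat.fib_add_two
  have hfib' : fib (p + 4) = fib (p + 2) + fib (p + 3) := Nat.fib_add_two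
  rw [fibSubsetCount_succ,
    fibSubsetCount_eq_two_pow (show fib (p + 4) ≤ fib (p + 3) + _ + 2 by omega),
    A_eq_fibSubsetCount (n := p + 1) (show _ < fib (p + 3) by omega)]

lemma fibSubsetCount_fib_add_fib_add_add_two (g : ℕ) :
    fibSubsetCount (p + g + 3) (fib (p + g + 4) + (fib (p + 2) + x')) =
      fibSubsetCount (p + g + 1) (fib (p + g + 2) + (fib (p + 2) + x')) + 2 ^ (p + g + 1)
        + A (fib (p + 2) + x') := by
  have hfib : fib (p + 3) = fib (p + 1) + fib (p + 2) := Nat.fib_add_two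
  have hfib' : fib (p + g + 4) = fib (p + g + 2) + fib (p + g + 3) := Nat.fib_add_two
  have hmono : fib (p + 3) ≤ fib (p + g + 4) := Nat.fib_mono (by omega)
  have hsplit : fib (p + g + 4) + (fib (p + 2) + x') =
      fib (p + g + 3) + (fib (p + g + 2) + (fib (p + 2) + x')) := by omega
  rw [fibSubsetCount_succ, hsplit, fibSubsetCount_succ,
    fibSubsetCount_eq_two_pow (n := p + g + 1)
      (show fib (p + g + 4) ≤ fib (p + g + 3) + _ + 2 by omega),
    ← A_eq_fibSubsetCount (n := p + g + 2) (show _ < fib (p + g + 4) by omega)]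
  omega

/-- The recursion for `g = 2 s + r`, with `t = s + 1` and `ε = 1 - r`. -/
lemma fibSubsetCount_fib_add_fib_add (s r : ℕ) (hr : r ≤ 1) :
    (fibSubsetCount (p + (2 * s + r) + 1)
        (fib (p + (2 * s + r) + 2) + (fib (p + 2) + x')) : ℤ) =
      (s + 1) * A (fib (p + 2) + x') - (1 - r) * A x' + fInt (s + 1) * 2 ^ (p + r) := by
  induction s with
  | zero =>
    have hfInt : fInt 1 = 1 := rfl
    interval_cases r
    · have := fibSubsetCount_fib_add_fib_add_zero hx'
      norm_num [hfInt]
      linarith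
    · have := fibSubsetCount_fib_add_fib_add_one hx'
      norm_num [hfInt]
      linarith
  | succ s ih =>
    have hstep := fibSubsetCount_fib_add_fib_add_add_two hx' (2 * s + r)
    rw [show p + (2 * (s + 1) + r) = p + (2 * s + r) + 2 by ring, fInt_succ_succ]
    rw [show p + (2 * s + r) + 2 + 1 = p + (2 * s + r) + 3 by ring,
      show p + (2 * s + r) + 2 + 2 = p + (2 * s + r) + 4 by ring, hstep]
    have hpow : (2 : ℤ) ^ (2 * s + 1) * 2 ^ (p + r) = 2 ^ (p + (2 * s + r) + 1) := by
      rw [← pow_add]; congr 1; ring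
    push_cast [ih]
    linear_combination hpow

end FibAddFibAdd

lemma A_fib_add_fib_add {M g x' : ℕ} (hM : 2 ≤ M) (hg : 2 ≤ g) (hx' : x' < fib (M - 1)) :
    (A (fib (M + g) + (fib M + x')) : ℤ) =
      (g / 2 + 1 : ℕ) * A (fib M + x') - (1 - (g % 2 : ℕ)) * A x'
        + fInt (g / 2 + 1) * 2 ^ (M - 2 + g % 2) := by
  obtain ⟨p, rfl⟩ : ∃ p, M = p + 2 := ⟨M - 2, by omega⟩
  have hfib : fib (p + 3) = fib (p + 1) + fib (p + 2) := Nat.fib_add_two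
  have hfib' : fib (p + g + 3) = fib (p + g + 1) + fib (p + g + 2) := Nat.fib_add_two
  have hmono : fib (p + 3) ≤ fib (p + g + 1) := Nat.fib_mono (by omega)
  replace hx' : x' < fib (p + 1) := by simpa using hx'
  rw [Nat.add_right_comm,
    A_eq_fibSubsetCount (n := p + g + 1) (show _ < fib (p + g + 3) by omega),
    show p + g = p + (2 * (g / 2) + g % 2) by omega,
    fibSubsetCount_fib_add_fib_add hx' (g / 2) (g % 2) (by omega)]
  push_cast
  ring

section Zeckendorf

variable {k : ℕ} {m : ℕ → ℕ} (hgap : ∀ i, 1 ≤ i → i ≤ k → m i + 2 ≤ m (i - 1))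
  (hmk : 2 ≤ m k)
include hgap hmk

lemma sum_fib_Icc_succ_lt {l : ℕ} (hl : l ≤ k) :
    ∑ i ∈ Icc (l + 1) k, fib (m i) < fib (m l - 1) := by
  induction hl using Nat.decreasingInduction with
  | self => simpa using Nat.fib_pos.2 (by omega : 0 < m k - 1)
  | of_succ l hl ih =>
    have hpos : 0 < m (l + 1) - 1 := Nat.fib_pos.1 (Nat.zero_lt_of_lt ih)
    have hfib : fib (m (l + 1) - 1 + 2) = fib (m (l + 1) - 1) + fib (m (l + 1) - 1 + 1) :=
      Nat.fib_add_two
    have hmono : fib (m (l + 1) - 1 + 2) ≤ fib (m l - 1) :=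
      Nat.fib_mono (by have := hgap (l + 1) (by omega) hl; rw [Nat.add_sub_cancel] at this; omega)
    rw [show m (l + 1) - 1 + 1 = m (l + 1) by omega] at hfib
    rw [← add_sum_Ioc_eq_sum_Icc hl, ← Icc_add_one_left_eq_Ioc]
    omega

lemma A_sum_fib_Icc {i t : ℕ} (hi : 1 ≤ i) (hik : i ≤ k)
    (ht : t = (m (i - 1) - m i + 2) / 2) :
    (A (∑ j ∈ Icc (i - 1) k, fib (m j)) : ℤ) =
      t * A (∑ j ∈ Icc i k, fib (m j))
        - (2 * t - 1 - m (i - 1) + m i) * A (∑ j ∈ Icc (i + 1) k, fib (m j))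
        + fInt t * 2 ^ (m (i - 1) - 2 * t) := by
  have htail := sum_fib_Icc_succ_lt hgap hmk hik
  have hmi : 2 ≤ m i := by have := Nat.fib_pos.1 (Nat.zero_lt_of_lt htail); omega
  have hsplit (l : ℕ) (hl : l ≤ k) :
      ∑ j ∈ Icc l k, fib (m j) = fib (m l) + ∑ j ∈ Icc (l + 1) k, fib (m j) := by
    rw [← add_sum_Ioc_eq_sum_Icc hl, Icc_add_one_left_eq_Ioc]
  have hgap_i := hgap i hi hik
  obtain ⟨g, hg⟩ : ∃ g, m (i - 1) = m i + g := ⟨m (i - 1) - m i, by omega⟩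
  have hg2 : 2 ≤ g := by omega
  have hε : (2 * ((g / 2 + 1 : ℕ) : ℤ) - 1 - ((m i + g : ℕ) : ℤ) + m i) =
      1 - ((g % 2 : ℕ) : ℤ) := by omega
  rw [hsplit (i - 1) (by omega), Nat.sub_add_cancel hi, hsplit i hik, hg,
    A_fib_add_fib_add hmi hg2 htail, show t = g / 2 + 1 by omega, hε,
    show m i + g - 2 * (g / 2 + 1) = m i - 2 + g % 2 by omega]

end Zeckendorf

lemma eq_of_backward_recurrence {k : ℕ} {X c t ε a : ℕ → ℤ}
    (hX : ∀ i, 1 ≤ i → i ≤ k → X (i - 1) = t i * X i - ε i * X (i + 1) + c i)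
    (ha0 : a 0 = 1) (ha1 : a 1 = t 1)
    (ha : ∀ l, 1 ≤ l → l ≤ k - 1 → a (l + 1) = t (l + 1) * a l - ε l * a (l - 1))
    {l : ℕ} (hl : 1 ≤ l) (hlk : l ≤ k) :
    X 0 = a l * X l - ε l * a (l - 1) * X (l + 1) + ∑ i ∈ Icc 1 l, a (i - 1) * c i := by
  induction l, hl using Nat.le_induction with
  | base =>
    rw [Icc_self, sum_singleton, ha1, Nat.sub_self, ha0]
    linear_combination hX 1 le_rfl hlk
  | succ l hl ih =>
    have hXl := hX (l + 1) (by omega) hlk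
    rw [Nat.add_sub_cancel] at hXl
    rw [sum_Icc_succ_top (by omega), Nat.add_sub_cancel, ha l hl (by omega)]
    linear_combination ih (by omega) + a l * hXl

theorem summatory_general_recursion_general
    (H k : ℕ) (m x t : ℕ → ℕ) (ε a : ℕ → ℤ)
    (hexp : H = ∑ i ∈ Finset.range (k + 1), Nat.fib (m i))
    (hgap : ∀ i : ℕ, 1 ≤ i → i ≤ k → m i + 2 ≤ m (i - 1))
    (hmk : 2 ≤ m k)
    (hx : ∀ l : ℕ, l ≤ k + 1 → x l = ∑ i ∈ Finset.Icc l k, Nat.fib (m i))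
    (ht : ∀ i : ℕ, 1 ≤ i → i ≤ k → t i = (m (i - 1) - m i + 2) / 2)
    (hε : ∀ i : ℕ, 1 ≤ i → i ≤ k →
      ε i = 2 * (t i : ℤ) - 1 - (m (i - 1) : ℤ) + (m i : ℤ))
    (ha0 : a 0 = 1)
    (ha1 : a 1 = (t 1 : ℤ))
    (ha : ∀ l : ℕ, 1 ≤ l → l ≤ k - 1 →
      a (l + 1) = (t (l + 1) : ℤ) * a l - ε l * a (l - 1)) :
    ∀ l : ℕ, 1 ≤ l → l ≤ k →
      (A H : ℤ) = a l * (A (x l) : ℤ) - ε l * a (l - 1) * (A (x (l + 1)) : ℤ)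
        + ∑ i ∈ Finset.Icc 1 l, a (i - 1) * fInt (t i) * 2 ^ (m (i - 1) - 2 * t i) := by
  intro l hl hlk
  have hH : H = x 0 := by rw [hexp, hx 0 (by omega), range_eq_Ico, Ico_add_one_right_eq_Icc]
  have hstep (i : ℕ) (hi : 1 ≤ i) (hik : i ≤ k) :
      (A (x (i - 1)) : ℤ) = t i * A (x i) - ε i * A (x (i + 1))
        + fInt (t i) * 2 ^ (m (i - 1) - 2 * t i) := by
    rw [hx (i - 1) (by omega), hx i (by omega), hx (i + 1) (by omega), hε i hi hik]
    exact A_sum_fib_Icc hgap hmk hi hik (ht i hi hik)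
  simp_rw [mul_assoc (a _)]
  rw [hH]
  exact eq_of_backward_recurrence (X := fun i => (A (x i) : ℤ)) hstep ha0 ha1 ha hl hlk

/-- The general recursion (2.2) for the summatory function. -/
theorem summatory_general_recursion
    (H k : ℕ) (m x t : ℕ → ℕ) (ε a : ℕ → ℤ)
    (hH : 0 < H) (hk : 1 ≤ k)
    (hexp : H = ∑ i ∈ Finset.range (k + 1), Nat.fib (m i))
    (hgap : ∀ i : ℕ, 1 ≤ i → i ≤ k → m i + 2 ≤ m (i - 1))
    (hmk : 2 ≤ m k)
    (hx : ∀ l : ℕ, l ≤ k + 1 → x l = ∑ i ∈ Finset.Icc l k, Nat.fib (m i))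
    (ht : ∀ i : ℕ, 1 ≤ i → i ≤ k → t i = (m (i - 1) - m i + 2) / 2)
    (hε : ∀ i : ℕ, 1 ≤ i → i ≤ k →
      ε i = 2 * (t i : ℤ) - 1 - (m (i - 1) : ℤ) + (m i : ℤ))
    (ha0 : a 0 = 1)
    (ha1 : a 1 = (t 1 : ℤ))
    (ha : ∀ l : ℕ, 1 ≤ l → l ≤ k - 1 →
      a (l + 1) = (t (l + 1) : ℤ) * a l - ε l * a (l - 1)) :
    ∀ l : ℕ, 1 ≤ l → l ≤ k →
      (A H : ℤ) = a l * (A (x l) : ℤ) - ε l * a (l - 1) * (A (x (l + 1)) : ℤ)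
        + ∑ i ∈ Finset.Icc 1 l, a (i - 1) * fInt (t i) * 2 ^ (m (i - 1) - 2 * t i) :=
  summatory_general_recursion_general H k m x t ε a hexp hgap hmk hx ht hε ha0 ha1 ha
end
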